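/- Suppose 1 < p < q < ∞ and (u,v) is a pair of weights on ℝⁿ such that the Hardy–Littlewood maximal operator satisfies M : L^p(v) → L^q(u) and M : L^{q'}(u^{1-q'}) → L^{p'}(v^{1-p'}). Then for any dyadic grid 𝒟, any sparse family 𝒮 ⊂ 𝒟, and any R ∈ 𝒟, the sparse operator's outer truncation T^R satisfies the Sawyer testing conditions: (∫ T^R(v^{1-p'}χ_R)^q u dx)^{1/q} ≤ C(∫_R v^{1-p'} dx)^{1/p} and (∫ T^R(uχ_R)^{p'} v^{1-p'} dx)^{1/p'} ≤ C(∫_R u dx)^{1/q'}, with C depending only on n, p, q and the norms of M. -/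

import Mathlib

open MeasureTheory Set
open scoped ENNReal
noncomputable section

/-- Axis-parallel half-open cube with corner `a` and side length `l`. -/
def cube (n : ℕ) (a : Fin n → ℝ) (l : ℝ) : Set (Fin n → ℝ) :=
  Set.univ.pi fun i => Set.Ico (a i) (a i + l)

/-- A (generalized) dyadic grid in ℝⁿ. -/
structure DyadicGrid (n : ℕ) where
  carrier : Set (Set (Fin n → ℝ))
  shape : ∀ Q ∈ carrier, ∃ (a : Fin n → ℝ) (k : ℤ), Q = cube n a ((2 : ℝ) ^ k)
  nested : ∀ Q ∈ carrier, ∀ P ∈ carrier, (Q ∩ P).Nonempty → Q ⊆ P ∨ P ⊆ Q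
  partition : ∀ (k : ℤ) (x : Fin n → ℝ),
    ∃! Q, Q ∈ carrier ∧ (∃ a, Q = cube n a ((2 : ℝ) ^ k)) ∧ x ∈ Q

/-- Hardy–Littlewood maximal function: supremum of averages over axis-parallel
cubes containing `x`. -/
def hlMaximal (n : ℕ) (f : (Fin n → ℝ) → ℝ≥0∞) (x : Fin n → ℝ) : ℝ≥0∞ :=
  ⨆ (a : Fin n → ℝ) (l : ℝ) (_ : 0 < l) (_ : x ∈ cube n a l),
    (∫⁻ y in cube n a l, f y) / volume (cube n a l)

/-- Dyadic maximal function associated with a dyadic grid `D`. -/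
def dyMaximal {n : ℕ} (D : DyadicGrid n) (f : (Fin n → ℝ) → ℝ≥0∞) (x : Fin n → ℝ) : ℝ≥0∞ :=
  ⨆ (Q : Set (Fin n → ℝ)) (_ : Q ∈ D.carrier) (_ : x ∈ Q),
    (∫⁻ y in Q, f y) / volume Q

/-- A sparse family inside the dyadic grid `D`, given as an indexed family
`F k = {Q_j^k}_j`: the cubes at each generation are pairwise disjoint,
`Ω_{k+1} ⊆ Ω_k` where `Ω_k = ⋃₀ F k`, and `|Ω_{k+1} ∩ Q| ≤ |Q|/2` for `Q ∈ F k`. -/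
def IsSparse {n : ℕ} (D : DyadicGrid n) (F : ℤ → Set (Set (Fin n → ℝ))) : Prop :=
  (∀ k, F k ⊆ D.carrier) ∧ (∀ k, (F k).Pairwise Disjoint) ∧
  (∀ k, ⋃₀ F (k + 1) ⊆ ⋃₀ F k) ∧
  (∀ k, ∀ Q ∈ F k, volume (⋃₀ F (k + 1) ∩ Q) ≤ volume Q / 2)

/-- The sparse (positive dyadic) operator `𝒜 f = Σ_{Q ∈ 𝒮} f_Q χ_Q` associated
with the sparse family `F`. -/
def sparseOp {n : ℕ} (F : ℤ → Set (Set (Fin n → ℝ))) (f : (Fin n → ℝ) → ℝ≥0∞)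
    (x : Fin n → ℝ) : ℝ≥0∞ :=
  ∑' Q : {Q : Set (Fin n → ℝ) // ∃ k, Q ∈ F k},
    ((∫⁻ y in Q.1, f y) / volume Q.1) * Q.1.indicator 1 x

/-- Outer truncation of the sparse operator:
`T^R f = Σ_{Q ∈ 𝒮, Q ⊇ R} f_Q χ_Q`. -/
def outerOp {n : ℕ} (F : ℤ → Set (Set (Fin n → ℝ))) (R : Set (Fin n → ℝ))
    (f : (Fin n → ℝ) → ℝ≥0∞) (x : Fin n → ℝ) : ℝ≥0∞ :=
  ∑' Q : {Q : Set (Fin n → ℝ) // (∃ k, Q ∈ F k) ∧ R ⊆ Q},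
    ((∫⁻ y in Q.1, f y) / volume Q.1) * Q.1.indicator 1 x

/-!
Fix `x`. Every cube `Q ⊇ R` of the sparse family that contains `x` contributes the term
`(∫_R f) / |Q| ≤ M_𝒟(f χ_R)(x)` to `T^R (f χ_R)(x)`. Two such cubes from the same generation
coincide, and by sparseness a cube `Q'` of a later generation has `|Q'| ≤ |Q| / 2`; so the
nonzero terms are pairwise separated by a factor `2` and their sum is at most twice their
maximum. Hence `T^R (f χ_R) ≤ 2 M(f χ_R)` pointwise, and both testing conditions follow from
the two assumed bounds for `M` applied to `f = v^{1-p'} χ_R` and `f = u χ_R`, because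
`(v^{1-p'})^p v ≤ v^{1-p'}` and `u^{q'} u^{1-q'} ≤ u`.
-/

namespace ENNReal

theorem rpow_mul_rpow_le_rpow_add (x : ℝ≥0∞) (y z : ℝ) : x ^ y * x ^ z ≤ x ^ (y + z) := by
  rcases eq_or_ne x 0 with rfl | hx₀
  · simp only [zero_rpow_def]
    split_ifs <;> simp <;> grind
  rcases eq_or_ne x ⊤ with rfl | hx
  · simp only [top_rpow_def]
    split_ifs <;> simp <;> grind
  exact (rpow_add y z hx₀ hx).ge

theorem two_mul_le_of_two_mul_le_of_le {a b : ℝ≥0∞} (hab : 2 * a ≤ b) (hba : b ≤ a) :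
    2 * b ≤ a := by
  rcases eq_or_ne a ⊤ with rfl | ha
  · exact le_top
  have : a ≤ 0 := ENNReal.le_of_add_le_add_left ha (by simpa [two_mul] using hab.trans hba)
  simp_all

variable {ι : Type*} {t : ι → ℝ≥0∞}

theorem sum_le_of_two_mul_le [DecidableEq ι]
    (hsep : ∀ i j, i ≠ j → 2 * t i ≤ t j ∨ 2 * t j ≤ t i) (s : Finset ι) {M : ℝ≥0∞}
    (hM : ∀ i ∈ s, 2 * t i ≤ M) : ∑ i ∈ s, t i ≤ M := by
  induction s using Finset.induction_on_max_value t generalizing M with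
  | empty => simp
  | insert a s ha hmax ih =>
    have hrest : ∑ i ∈ s, t i ≤ t a := ih fun i hi =>
      (hsep i a (ne_of_mem_of_not_mem hi ha)).elim id
        fun h => two_mul_le_of_two_mul_le_of_le h (hmax i hi)
    calc ∑ i ∈ insert a s, t i = t a + ∑ i ∈ s, t i := Finset.sum_insert ha
      _ ≤ t a + t a := by gcongr
      _ = 2 * t a := (two_mul _).symm
      _ ≤ M := hM a (Finset.mem_insert_self a s)

theorem tsum_le_two_mul_of_two_mul_le (hsep : ∀ i j, i ≠ j → 2 * t i ≤ t j ∨ 2 * t j ≤ t i)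
    {M : ℝ≥0∞} (hM : ∀ i, t i ≤ M) : ∑' i, t i ≤ 2 * M := by
  classical
  exact ENNReal.summable.tsum_le_of_sum_le fun s =>
    sum_le_of_two_mul_le hsep s fun i _ => by gcongr; exact hM i

theorem two_mul_div_le_div_of_two_mul_le (A : ℝ≥0∞) {a b : ℝ≥0∞} (h : 2 * b ≤ a) :
    2 * (A / a) ≤ A / b := by
  have hb : b ≤ a / 2 := by
    rw [ENNReal.le_div_iff_mul_le (by simp) (by simp), mul_comm]
    exact h
  calc 2 * (A / a) = A / (a / 2) := by
        rw [div_eq_mul_inv, div_eq_mul_inv, ENNReal.inv_div (by simp) (by simp), mul_left_comm,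
          div_eq_mul_inv]
    _ ≤ A / b := by gcongr

end ENNReal

theorem measurableSet_cube (n : ℕ) (a : Fin n → ℝ) (l : ℝ) : MeasurableSet (cube n a l) :=
  .univ_pi fun _ => measurableSet_Ico

theorem volume_cube (n : ℕ) (a : Fin n → ℝ) (l : ℝ) :
    volume (cube n a l) = ENNReal.ofReal l ^ n := by
  simp [cube, volume_pi_pi, Real.volume_Ico]

namespace DyadicGrid

variable {n : ℕ} (D : DyadicGrid n) {Q : Set (Fin n → ℝ)}

theorem measurableSet_of_mem (hQ : Q ∈ D.carrier) : MeasurableSet Q := by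
  obtain ⟨a, k, rfl⟩ := D.shape Q hQ
  exact measurableSet_cube n a _

theorem volume_pos_of_mem (hQ : Q ∈ D.carrier) : 0 < volume Q := by
  obtain ⟨a, k, rfl⟩ := D.shape Q hQ
  rw [volume_cube]
  exact ENNReal.pow_pos (ENNReal.ofReal_pos.mpr (by positivity)) n

theorem volume_ne_top_of_mem (hQ : Q ∈ D.carrier) : volume Q ≠ ⊤ := by
  obtain ⟨a, k, rfl⟩ := D.shape Q hQ
  rw [volume_cube]
  exact ENNReal.pow_ne_top ENNReal.ofReal_ne_top

end DyadicGrid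

namespace IsSparse

variable {n : ℕ} {D : DyadicGrid n} {F : ℤ → Set (Set (Fin n → ℝ))} (hF : IsSparse D F)
include hF

theorem sUnion_antitone : Antitone fun k => ⋃₀ F k :=
  antitone_int_of_succ_le hF.2.2.1

theorem two_mul_volume_le_of_lt {k k' : ℤ} (hkk' : k < k') {Q Q' : Set (Fin n → ℝ)}
    (hQ : Q ∈ F k) (hQ' : Q' ∈ F k') (hQQ' : (Q ∩ Q').Nonempty) :
    2 * volume Q' ≤ volume Q := by
  have hQD := hF.1 k hQ
  have hhalf := hF.2.2.2 k Q hQ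
  have hQ'Ω : Q' ⊆ ⋃₀ F (k + 1) :=
    (subset_sUnion_of_mem hQ').trans (hF.sUnion_antitone (Int.add_one_le_of_lt hkk'))
  rcases D.nested Q hQD Q' (hF.1 k' hQ') hQQ' with hQQ' | hQ'Q
  · -- `Q` would lie in `Ω_{k+1} ∩ Q`, whose measure is at most `|Q| / 2`
    rw [inter_eq_self_of_subset_right (hQQ'.trans hQ'Ω)] at hhalf
    exact absurd hhalf (ENNReal.half_lt_self (D.volume_pos_of_mem hQD).ne'
      (D.volume_ne_top_of_mem hQD)).not_ge
  · rw [mul_comm, ← ENNReal.le_div_iff_mul_le (by simp) (by simp)]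
    exact (measure_mono (subset_inter hQ'Ω hQ'Q)).trans hhalf

theorem two_mul_volume_le_or {k k' : ℤ} {Q Q' : Set (Fin n → ℝ)} (hQ : Q ∈ F k)
    (hQ' : Q' ∈ F k') (hne : Q ≠ Q') (hQQ' : (Q ∩ Q').Nonempty) :
    2 * volume Q' ≤ volume Q ∨ 2 * volume Q ≤ volume Q' := by
  rcases lt_trichotomy k k' with hkk' | rfl | hk'k
  · exact .inl (hF.two_mul_volume_le_of_lt hkk' hQ hQ' hQQ')
  · exact absurd (hF.2.1 k hQ hQ' hne) (not_disjoint_iff_nonempty_inter.mpr hQQ')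
  · exact .inr (hF.two_mul_volume_le_of_lt hk'k hQ' hQ (inter_comm Q Q' ▸ hQQ'))

end IsSparse

section Maximal

variable {n : ℕ} {D : DyadicGrid n} (f : (Fin n → ℝ) → ℝ≥0∞) (x : Fin n → ℝ)

theorem dyMaximal_le_hlMaximal : dyMaximal D f x ≤ hlMaximal n f x := by
  refine iSup₂_le fun Q hQ => iSup_le fun hx => ?_
  obtain ⟨a, k, rfl⟩ := D.shape Q hQ
  exact le_iSup₂_of_le a ((2 : ℝ) ^ k) (le_iSup₂_of_le (by positivity) hx le_rfl)

theorem lintegral_div_volume_mul_indicator_le_dyMaximal {Q : Set (Fin n → ℝ)}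
    (hQ : Q ∈ D.carrier) :
    (∫⁻ y in Q, f y) / volume Q * Q.indicator 1 x ≤ dyMaximal D f x := by
  by_cases hx : x ∈ Q
  · rw [indicator_of_mem hx, Pi.one_apply, mul_one]
    exact le_iSup₂_of_le Q hQ (le_iSup_of_le hx le_rfl)
  · simp [indicator_of_notMem hx]

end Maximal

theorem outerOp_indicator_le_two_mul_dyMaximal {n : ℕ} {D : DyadicGrid n}
    {F : ℤ → Set (Set (Fin n → ℝ))} (hF : IsSparse D F) {R : Set (Fin n → ℝ)}
    (hR : R ∈ D.carrier) (g : (Fin n → ℝ) → ℝ≥0∞) (x : Fin n → ℝ) :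
    outerOp F R (R.indicator g) x ≤ 2 * dyMaximal D (R.indicator g) x := by
  refine ENNReal.tsum_le_two_mul_of_two_mul_le ?_ fun ⟨Q, ⟨k, hQ⟩, _⟩ =>
    lintegral_div_volume_mul_indicator_le_dyMaximal _ x (hF.1 k hQ)
  rintro ⟨Q, ⟨k, hQ⟩, hRQ⟩ ⟨Q', ⟨k', hQ'⟩, hRQ'⟩ hne
  by_cases hxQ : x ∈ Q
  swap
  · simp [indicator_of_notMem hxQ]
  by_cases hxQ' : x ∈ Q'
  swap
  · simp [indicator_of_notMem hxQ']
  simp only [indicator_of_mem hxQ, indicator_of_mem hxQ', Pi.one_apply, mul_one,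
    setLIntegral_indicator (D.measurableSet_of_mem hR), inter_eq_left.mpr hRQ,
    inter_eq_left.mpr hRQ']
  rcases hF.two_mul_volume_le_or hQ hQ' (fun h => hne (Subtype.ext h)) ⟨x, hxQ, hxQ'⟩
    with h | h
  · exact .inl (ENNReal.two_mul_div_le_div_of_two_mul_le _ h)
  · exact .inr (ENNReal.two_mul_div_le_div_of_two_mul_le _ h)

section WeightedNorm

variable {α : Type*} [MeasurableSpace α] {μ : Measure α} {f g w : α → ℝ≥0∞} {s : ℝ}

theorem lintegral_rpow_mul_rpow_le_of_le_const_mul (hs : 0 < s) {c : ℝ≥0∞} (hc : c ≠ ⊤)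
    (hfg : ∀ x, f x ≤ c * g x) :
    (∫⁻ x, f x ^ s * w x ∂μ) ^ (1 / s) ≤ c * (∫⁻ x, g x ^ s * w x ∂μ) ^ (1 / s) :=
  calc (∫⁻ x, f x ^ s * w x ∂μ) ^ (1 / s)
      ≤ (∫⁻ x, c ^ s * (g x ^ s * w x) ∂μ) ^ (1 / s) := by
        refine ENNReal.rpow_le_rpow (lintegral_mono fun x => ?_) (by positivity)
        calc f x ^ s * w x ≤ (c * g x) ^ s * w x := by gcongr; exact hfg x
          _ = c ^ s * (g x ^ s * w x) := by rw [ENNReal.mul_rpow_of_nonneg _ _ hs.le, mul_assoc]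
    _ = c * (∫⁻ x, g x ^ s * w x ∂μ) ^ (1 / s) := by
        rw [lintegral_const_mul' _ _ (ENNReal.rpow_ne_top_of_nonneg hs.le hc),
          ENNReal.mul_rpow_of_nonneg _ _ (by positivity), one_div,
          ENNReal.rpow_rpow_inv hs.ne']

theorem lintegral_indicator_rpow_mul_le {R : Set α} (hR : MeasurableSet R) (hs : 0 < s)
    (hfw : ∀ x, f x ^ s * w x ≤ f x) :
    ∫⁻ x, R.indicator f x ^ s * w x ∂μ ≤ ∫⁻ x in R, f x ∂μ := by
  rw [← lintegral_indicator hR]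
  refine lintegral_mono fun x => ?_
  by_cases hx : x ∈ R
  · simpa [indicator_of_mem hx] using hfw x
  · simp [indicator_of_notMem hx, ENNReal.zero_rpow_of_pos hs]

end WeightedNorm

theorem rpow_one_sub_conj_rpow_mul_le {p p' : ℝ} (hpp' : p.HolderConjugate p') (a : ℝ≥0∞) :
    (a ^ (1 - p')) ^ p * a ≤ a ^ (1 - p') := by
  have hexp : (1 - p') * p + 1 = 1 - p' := by linear_combination -hpp'.mul_eq_add
  calc (a ^ (1 - p')) ^ p * a = a ^ ((1 - p') * p) * a ^ (1 : ℝ) := by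
        rw [ENNReal.rpow_mul, ENNReal.rpow_one]
    _ ≤ a ^ (1 - p') := (ENNReal.rpow_mul_rpow_le_rpow_add a _ _).trans_eq (by rw [hexp])

theorem outerOp_testing_of_hlMaximal_le {n : ℕ} {D : DyadicGrid n}
    {F : ℤ → Set (Set (Fin n → ℝ))} (hF : IsSparse D F) {R : Set (Fin n → ℝ)}
    (hR : R ∈ D.carrier) {σ w w₀ : (Fin n → ℝ) → ℝ≥0∞} {s r : ℝ} (hs : 0 < s) (hr : 0 < r)
    {N : ℝ≥0∞} (hM : (∫⁻ x, hlMaximal n (R.indicator σ) x ^ s * w x) ^ (1 / s)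
      ≤ N * (∫⁻ x, R.indicator σ x ^ r * w₀ x) ^ (1 / r))
    (hσ : ∀ x, σ x ^ r * w₀ x ≤ σ x) :
    (∫⁻ x, outerOp F R (R.indicator σ) x ^ s * w x) ^ (1 / s)
      ≤ 2 * N * (∫⁻ x in R, σ x) ^ (1 / r) :=
  calc (∫⁻ x, outerOp F R (R.indicator σ) x ^ s * w x) ^ (1 / s)
      ≤ 2 * (∫⁻ x, hlMaximal n (R.indicator σ) x ^ s * w x) ^ (1 / s) :=
        lintegral_rpow_mul_rpow_le_of_le_const_mul hs ENNReal.ofNat_ne_top fun x =>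
          (outerOp_indicator_le_two_mul_dyMaximal hF hR σ x).trans
            (by gcongr; exact dyMaximal_le_hlMaximal _ x)
    _ ≤ 2 * (N * (∫⁻ x in R, σ x) ^ (1 / r)) := by
        grw [hM, lintegral_indicator_rpow_mul_le (D.measurableSet_of_mem hR) hr hσ]
    _ = 2 * N * (∫⁻ x in R, σ x) ^ (1 / r) := (mul_assoc _ _ _).symm

/-- if `M : L^p(v) → L^q(u)` and
`M : L^{q'}(u^{1-q'}) → L^{p'}(v^{1-p'})`, then the outer truncations `T^R` of
sparse operators satisfy both Sawyer testing conditions, with constant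
depending only on `n, p, q` and the norms of `M`. -/
theorem stmt12 (n : ℕ) (p q p' q' : ℝ) (hp : 1 < p) (hpq : p < q)
    (hp' : p' = p / (p - 1)) (hq' : q' = q / (q - 1))
    (N₁ N₂ : ℝ≥0∞) (hN₁ : N₁ ≠ ⊤) (hN₂ : N₂ ≠ ⊤) :
    ∃ C : ℝ≥0∞, C ≠ ⊤ ∧
      ∀ u v : (Fin n → ℝ) → ℝ≥0∞,
        (∀ f : (Fin n → ℝ) → ℝ≥0∞,
          (∫⁻ x, hlMaximal n f x ^ q * u x) ^ (1 / q)
            ≤ N₁ * (∫⁻ x, f x ^ p * v x) ^ (1 / p)) →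
        (∀ f : (Fin n → ℝ) → ℝ≥0∞,
          (∫⁻ x, hlMaximal n f x ^ p' * v x ^ (1 - p')) ^ (1 / p')
            ≤ N₂ * (∫⁻ x, f x ^ q' * u x ^ (1 - q')) ^ (1 / q')) →
        ∀ (D : DyadicGrid n) (F : ℤ → Set (Set (Fin n → ℝ))), IsSparse D F →
          ∀ R ∈ D.carrier,
            (∫⁻ x, outerOp F R (R.indicator fun y => v y ^ (1 - p')) x ^ q * u x) ^ (1 / q)
                ≤ C * (∫⁻ x in R, v x ^ (1 - p')) ^ (1 / p) ∧
            (∫⁻ x, outerOp F R (R.indicator u) x ^ p' * v x ^ (1 - p')) ^ (1 / p')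
                ≤ C * (∫⁻ x in R, u x) ^ (1 / q') := by
  have hpp' : p.HolderConjugate p' := (Real.holderConjugate_iff_eq_conjExponent hp).2 hp'
  have hqq' : q.HolderConjugate q' :=
    (Real.holderConjugate_iff_eq_conjExponent (hp.trans hpq)).2 hq'
  refine ⟨2 * (N₁ + N₂), by finiteness, fun u v hM₁ hM₂ D F hF R hR => ⟨?_, ?_⟩⟩
  · grw [outerOp_testing_of_hlMaximal_le hF hR hqq'.pos hpp'.pos (hM₁ _)
      (fun x => rpow_one_sub_conj_rpow_mul_le hpp' (v x)), ← le_self_add]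
  · grw [outerOp_testing_of_hlMaximal_le hF hR hpp'.symm.pos hqq'.symm.pos (hM₂ _)
      (fun x => (ENNReal.rpow_mul_rpow_le_rpow_add _ _ _).trans_eq (by simp)), ← le_add_self]
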